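/- arXiv:1801.07308 — 2 statements merged into one kernel-verified Lean document; each statement's English description precedes it below -/
import Mathlib

section
/- Let X, Y, Z be real Hilbert spaces, D ⊆ X a nonempty, bounded, closed, convex subset, L : dom L ⊆ X → Z a closed linear operator with D ∩ dom L ≠ ∅, F : D → Y weakly sequentially closed, and v ∈ Y. If there exists at least one μ ∈ D ∩ dom L with F(μ) = v, then there exists an ‖L(·)‖-minimizing solution of F(μ) = v, i.e., an element μ⁺ ∈ D ∩ dom L with F(μ⁺) = v and ‖Lμ⁺‖ ≤ ‖Lμ‖ for all μ ∈ D ∩ dom L with F(μ) = v. -/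
open Filter Topology
open scoped RealInnerProductSpace

/-- A sequence `x` in a real inner-product space converges weakly to `l`. -/
def WeakTendsto {X : Type*} [NormedAddCommGroup X] [InnerProductSpace ℝ X]
    (x : ℕ → X) (l : X) : Prop :=
  ∀ w : X, Tendsto (fun n => ⟪w, x n⟫) atTop (nhds ⟪w, l⟫)

/-- `F : D → Y` is weakly sequentially closed: whenever `μₙ ∈ D`, `μₙ ⇀ μ` weakly in `X`
and `F(μₙ) ⇀ y` weakly in `Y`, one has `μ ∈ D` and `F(μ) = y`. -/
def WeaklySeqClosedOn {X Y : Type*}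
    [NormedAddCommGroup X] [InnerProductSpace ℝ X]
    [NormedAddCommGroup Y] [InnerProductSpace ℝ Y]
    (F : X → Y) (D : Set X) : Prop :=
  ∀ (μs : ℕ → X) (μ : X) (y : Y), (∀ n, μs n ∈ D) →
    WeakTendsto μs μ → WeakTendsto (fun n => F (μs n)) y → μ ∈ D ∧ F μ = y

theorem exists_weak_subseq {X : Type*} [NormedAddCommGroup X] [InnerProductSpace ℝ X]
    [CompleteSpace X] (x : ℕ → X) (R : ℝ) (hR : ∀ n, ‖x n‖ ≤ R) :
    ∃ (φ : ℕ → ℕ) (l : X), StrictMono φ ∧ WeakTendsto (x ∘ φ) l := by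
  have hR0 : 0 ≤ R := le_trans (norm_nonneg (x 0)) (hR 0)
  have hcpt : IsSeqCompact (Set.univ.pi fun _ : ℕ => Set.Icc (-(R*R)) (R*R)) :=
    (isCompact_univ_pi fun _ => isCompact_Icc).isSeqCompact
  have hmem : ∀ n, (fun k => ⟪x k, x n⟫) ∈ Set.univ.pi fun _ : ℕ => Set.Icc (-(R*R)) (R*R) := by
    intro n k _
    have h1 : |⟪x k, x n⟫| ≤ R * R := by
      calc |⟪x k, x n⟫| ≤ ‖x k‖ * ‖x n‖ := abs_real_inner_le_norm _ _
        _ ≤ R * R := mul_le_mul (hR k) (hR n) (norm_nonneg _) hR0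
    exact Set.mem_Icc.mpr (abs_le.mp h1)
  obtain ⟨f, -, φ, hφ, hconv⟩ := hcpt hmem
  have hpt : ∀ k, Tendsto (fun n => ⟪x k, x (φ n)⟫) atTop (𝓝 (f k)) := by
    intro k
    simpa using tendsto_pi_nhds.mp hconv k
  set M := (Submodule.span ℝ (Set.range x)).topologicalClosure with hMdef
  have hMclosed : IsClosed (M : Set X) := Submodule.isClosed_topologicalClosure _
  haveI : CompleteSpace M := hMclosed.completeSpace_coe
  have hxM : ∀ n, x n ∈ M := fun n =>
    Submodule.le_topologicalClosure _ (Submodule.subset_span ⟨n, rfl⟩)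
  have hspan : ∀ u ∈ Submodule.span ℝ (Set.range x),
      CauchySeq (fun n => ⟪u, x (φ n)⟫) := by
    intro u hu
    induction hu using Submodule.span_induction with
    | mem v hv => obtain ⟨k, rfl⟩ := hv; exact (hpt k).cauchySeq
    | zero => simpa using cauchySeq_const (0 : ℝ)
    | add v w _ _ hv hw => simpa [inner_add_left, Pi.add_def] using hv.add hw
    | smul a v _ hv =>
        obtain ⟨l, hl⟩ := cauchySeq_tendsto_of_complete hv
        exact Tendsto.cauchySeq (by simpa [real_inner_smul_left] using hl.const_mul a)
  have hMcauchy : ∀ u ∈ M, CauchySeq (fun n => ⟪u, x (φ n)⟫) := by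
    intro u hu
    rw [Metric.cauchySeq_iff]
    intro ε hε
    have hRpos : 0 < R + 1 := by linarith
    have hu' : u ∈ closure (Submodule.span ℝ (Set.range x) : Set X) := hu
    obtain ⟨u', hu'mem, hdist⟩ := Metric.mem_closure_iff.mp hu' (ε / (4 * (R + 1)))
      (by positivity)
    obtain ⟨N, hN⟩ := Metric.cauchySeq_iff.mp (hspan u' hu'mem) (ε / 2) (by positivity)
    refine ⟨N, fun m hm n hn => ?_⟩
    have hub : ∀ j, |⟪u, x (φ j)⟫ - ⟪u', x (φ j)⟫| ≤ ε / 4 := by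
      intro j
      have : ⟪u, x (φ j)⟫ - ⟪u', x (φ j)⟫ = ⟪u - u', x (φ j)⟫ := (inner_sub_left _ _ _).symm
      rw [this]
      calc |⟪u - u', x (φ j)⟫| ≤ ‖u - u'‖ * ‖x (φ j)‖ := abs_real_inner_le_norm _ _
        _ ≤ ‖u - u'‖ * R := mul_le_mul_of_nonneg_left (hR _) (norm_nonneg _)
        _ ≤ (ε / (4 * (R + 1))) * R := by
            have h2 : ‖u - u'‖ ≤ ε / (4 * (R + 1)) := by
              rw [← dist_eq_norm]; exact hdist.le
            exact mul_le_mul_of_nonneg_right h2 hR0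
        _ ≤ ε / 4 := by
            rw [div_mul_eq_mul_div, div_le_div_iff₀ (by positivity) (by norm_num)]
            nlinarith
    have h3 := hN m hm n hn
    rw [Real.dist_eq] at h3 ⊢
    have e1 := hub m
    have e2 := hub n
    have : |⟪u, x (φ m)⟫ - ⟪u, x (φ n)⟫| ≤
        |⟪u, x (φ m)⟫ - ⟪u', x (φ m)⟫| + |⟪u', x (φ m)⟫ - ⟪u', x (φ n)⟫|
          + |⟪u', x (φ n)⟫ - ⟪u, x (φ n)⟫| := by
      have := abs_sub_le (⟪u, x (φ m)⟫) (⟪u', x (φ m)⟫) (⟪u, x (φ n)⟫)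
      have := abs_sub_le (⟪u', x (φ m)⟫) (⟪u', x (φ n)⟫) (⟪u, x (φ n)⟫)
      linarith [abs_sub_le (⟪u, x (φ m)⟫) (⟪u', x (φ m)⟫) (⟪u, x (φ n)⟫),
        abs_sub_le (⟪u', x (φ m)⟫) (⟪u', x (φ n)⟫) (⟪u, x (φ n)⟫)]
    have e3 : |⟪u', x (φ n)⟫ - ⟪u, x (φ n)⟫| ≤ ε / 4 := by
      rw [abs_sub_comm]; exact hub n
    linarith
  have key : ∀ w : X, ∃ a : ℝ, Tendsto (fun n => ⟪w, x (φ n)⟫) atTop (𝓝 a) := by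
    intro w
    have heq : ∀ n, ⟪w, x (φ n)⟫ = ⟪((M.orthogonalProjectionOnto w : M) : X), x (φ n)⟫ := by
      intro n
      have h0 : ⟪w - ((M.orthogonalProjectionOnto w : M) : X), x (φ n)⟫ = 0 :=
        Submodule.starProjection_inner_eq_zero w (x (φ n)) (hxM (φ n))
      rw [inner_sub_left] at h0
      linarith
    have hc : CauchySeq (fun n => ⟪((M.orthogonalProjectionOnto w : M) : X), x (φ n)⟫) :=
      hMcauchy _ (M.orthogonalProjectionOnto w).2
    obtain ⟨a, ha⟩ := cauchySeq_tendsto_of_complete hc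
    exact ⟨a, by simpa only [← heq] using ha⟩
  choose T hT using key
  have hadd : ∀ w w', T (w + w') = T w + T w' := fun w w' =>
    tendsto_nhds_unique (hT (w + w'))
      (by simpa [inner_add_left] using (hT w).add (hT w'))
  have hsmul : ∀ (a : ℝ) w, T (a • w) = a * T w := fun a w =>
    tendsto_nhds_unique (hT (a • w))
      (by simpa [real_inner_smul_left] using (hT w).const_mul a)
  have hbound : ∀ w, ‖T w‖ ≤ R * ‖w‖ := by
    intro w
    have h1 : Tendsto (fun n => |⟪w, x (φ n)⟫|) atTop (𝓝 |T w|) := (hT w).abs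
    refine le_of_tendsto h1 (Eventually.of_forall fun n => ?_)
    calc |⟪w, x (φ n)⟫| ≤ ‖w‖ * ‖x (φ n)‖ := abs_real_inner_le_norm _ _
      _ ≤ ‖w‖ * R := mul_le_mul_of_nonneg_left (hR _) (norm_nonneg _)
      _ = R * ‖w‖ := mul_comm _ _
  let Tl : X →ₗ[ℝ] ℝ :=
    { toFun := T, map_add' := hadd, map_smul' := hsmul }
  let T' : X →L[ℝ] ℝ := LinearMap.mkContinuous Tl R hbound
  refine ⟨φ, (InnerProductSpace.toDual ℝ X).symm T', hφ, fun w => ?_⟩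
  have h2 : ⟪w, (InnerProductSpace.toDual ℝ X).symm T'⟫ = T w := by
    rw [real_inner_comm]
    exact InnerProductSpace.toDual_symm_apply
  rw [h2]
  exact hT w

theorem weak_pair_mem {X Z : Type*}
    [NormedAddCommGroup X] [InnerProductSpace ℝ X] [CompleteSpace X]
    [NormedAddCommGroup Z] [InnerProductSpace ℝ Z] [CompleteSpace Z]
    {G : Set (X × Z)} (hGc : IsClosed G) (hGconv : Convex ℝ G)
    {x : ℕ → X} {z : ℕ → Z} {a : X} {b : Z}
    (hx : WeakTendsto x a) (hz : WeakTendsto z b)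
    (hmem : ∀ n, (x n, z n) ∈ G) : (a, b) ∈ G := by
  by_contra hab
  obtain ⟨f, u, hfu, huf⟩ := geometric_hahn_banach_closed_point hGconv hGc hab
  set w₁ := (InnerProductSpace.toDual ℝ X).symm (f.comp (ContinuousLinearMap.inl ℝ X Z)) with hw₁
  set w₂ := (InnerProductSpace.toDual ℝ Z).symm (f.comp (ContinuousLinearMap.inr ℝ X Z)) with hw₂
  have hf : ∀ p : X × Z, f p = ⟪w₁, p.1⟫ + ⟪w₂, p.2⟫ := by
    intro p
    have h1 : ⟪w₁, p.1⟫ = f (p.1, 0) := by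
      rw [hw₁, InnerProductSpace.toDual_symm_apply]
      rfl
    have h2 : ⟪w₂, p.2⟫ = f (0, p.2) := by
      rw [hw₂, InnerProductSpace.toDual_symm_apply]
      rfl
    rw [h1, h2, ← map_add]
    norm_num
  have h1 : Tendsto (fun n => f (x n, z n)) atTop (𝓝 (f (a, b))) := by
    simp only [hf]
    exact (hx w₁).add (hz w₂)
  have : f (a, b) ≤ u := le_of_tendsto h1 (Eventually.of_forall fun n => (hfu _ (hmem n)).le)
  linarith

lemma weakTendsto_subseq {X : Type*} [NormedAddCommGroup X] [InnerProductSpace ℝ X]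
    {x : ℕ → X} {l : X} (hx : WeakTendsto x l) {ψ : ℕ → ℕ} (hψ : StrictMono ψ) :
    WeakTendsto (fun n => x (ψ n)) l := fun w =>
  (hx w).comp hψ.tendsto_atTop

/-- **Existence of `‖L(·)‖`-minimizing solutions.**
Let `X`, `Y`, `Z` be real Hilbert spaces, `D ⊆ X` nonempty, bounded, closed and convex,
`L : dom L ⊆ X → Z` a closed linear operator with `D ∩ dom L ≠ ∅`, `F : D → Y` weakly
sequentially closed, and `v ∈ Y`.  If there is at least one `μ ∈ D ∩ dom L` with
`F(μ) = v`, then there is an `‖L(·)‖`-minimizing solution of `F(μ) = v`: an element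
`μ⁺ ∈ D ∩ dom L` with `F(μ⁺) = v` and `‖Lμ⁺‖ ≤ ‖Lμ‖` for all solutions
`μ ∈ D ∩ dom L` of `F(μ) = v`. -/
theorem exists_L_minimizing_solution
    {X Y Z : Type*}
    [NormedAddCommGroup X] [InnerProductSpace ℝ X] [CompleteSpace X]
    [NormedAddCommGroup Y] [InnerProductSpace ℝ Y] [CompleteSpace Y]
    [NormedAddCommGroup Z] [InnerProductSpace ℝ Z] [CompleteSpace Z]
    (D : Set X) (hDne : D.Nonempty) (hDbdd : Bornology.IsBounded D)
    (hDclosed : IsClosed D) (hDconvex : Convex ℝ D)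
    (domL : Submodule ℝ X) (L : domL →ₗ[ℝ] Z)
    (hLgraph : IsClosed {p : X × Z | ∃ h : p.1 ∈ domL, L ⟨p.1, h⟩ = p.2})
    (hmeet : ∃ μ, μ ∈ D ∧ μ ∈ domL)
    (F : X → Y) (hF : WeaklySeqClosedOn F D)
    (v : Y)
    (hsol : ∃ μ, ∃ _ : μ ∈ D, ∃ _ : μ ∈ domL, F μ = v) :
    ∃ μplus, ∃ _ : μplus ∈ D, ∃ hplus : μplus ∈ domL, F μplus = v ∧
      ∀ μ, μ ∈ D → ∀ hμ : μ ∈ domL, F μ = v →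
        ‖L ⟨μplus, hplus⟩‖ ≤ ‖L ⟨μ, hμ⟩‖ := by
  classical
  -- the set of attained norms
  set A : Set ℝ := {r | ∃ μ, ∃ _ : μ ∈ D, ∃ hd : μ ∈ domL, F μ = v ∧ r = ‖L ⟨μ, hd⟩‖} with hA
  have hAne : A.Nonempty := by
    obtain ⟨μ, hD, hd, hFv⟩ := hsol
    exact ⟨‖L ⟨μ, hd⟩‖, μ, hD, hd, hFv, rfl⟩
  have hAbdd : ∀ r ∈ A, (0:ℝ) ≤ r := by
    rintro r ⟨μ, hD, hd, hFv, rfl⟩; exact norm_nonneg _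
  set m : ℝ := sInf A with hm
  have hm0 : 0 ≤ m := Real.sInf_nonneg hAbdd
  have hmle : ∀ r ∈ A, m ≤ r := fun r hr => csInf_le ⟨0, hAbdd⟩ hr
  -- minimizing sequence
  have hseq : ∀ n : ℕ, ∃ μ, ∃ _ : μ ∈ D, ∃ hd : μ ∈ domL,
      F μ = v ∧ ‖L ⟨μ, hd⟩‖ ≤ m + 1 / (n + 1) := by
    intro n
    obtain ⟨r, hrA, hrlt⟩ := Real.lt_sInf_add_pos hAne
      (show (0:ℝ) < 1 / (n + 1) by positivity)
    obtain ⟨μ, hD, hd, hFv, rfl⟩ := hrA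
    exact ⟨μ, hD, hd, hFv, hrlt.le⟩
  choose μs hD hdom hFv hnorm using hseq
  -- D is bounded in norm
  obtain ⟨R, hRbd⟩ := hDbdd.exists_norm_le
  -- first weak subsequence in X
  obtain ⟨φ, μplus, hφ, hwx⟩ := exists_weak_subseq μs R fun n => hRbd _ (hD n)
  -- second weak subsequence for the L-values
  obtain ⟨ψ, z, hψ, hwz⟩ := exists_weak_subseq (fun n => L ⟨μs (φ n), hdom (φ n)⟩)
    (m + 1) (fun n => le_trans (hnorm (φ n)) (by
      have : (1:ℝ) / (φ n + 1) ≤ 1 := by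
        rw [div_le_one (by positivity)]
        have : (0:ℝ) ≤ (φ n : ℝ) := Nat.cast_nonneg _
        linarith
      linarith))
  set θ : ℕ → ℕ := φ ∘ ψ with hθ
  have hθmono : StrictMono θ := hφ.comp hψ
  have hwxθ : WeakTendsto (fun n => μs (θ n)) μplus := fun w =>
    ((hwx w).comp hψ.tendsto_atTop)
  have hwzθ : WeakTendsto (fun n => L ⟨μs (θ n), hdom (θ n)⟩) z := fun w => hwz w
  -- F-closedness gives membership in D and F μplus = v
  have hFcl : μplus ∈ D ∧ F μplus = v := by
    refine hF (fun n => μs (θ n)) μplus v (fun n => hD _) hwxθ ?_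
    intro w
    have : (fun n => ⟪w, F (μs (θ n))⟫) = fun _ => ⟪w, v⟫ := by
      funext n; rw [hFv]
    rw [this]
    exact tendsto_const_nhds
  -- graph is convex
  have hGconv : Convex ℝ {p : X × Z | ∃ h : p.1 ∈ domL, L ⟨p.1, h⟩ = p.2} := by
    rintro ⟨p1, p2⟩ ⟨hp1, hp2⟩ ⟨q1, q2⟩ ⟨hq1, hq2⟩ a b ha hb hab
    refine ⟨domL.add_mem (domL.smul_mem a hp1) (domL.smul_mem b hq1), ?_⟩
    show L ⟨a • p1 + b • q1, _⟩ = a • p2 + b • q2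
    have heq : (⟨a • p1 + b • q1, domL.add_mem (domL.smul_mem a hp1) (domL.smul_mem b hq1)⟩ : domL)
        = a • (⟨p1, hp1⟩ : domL) + b • (⟨q1, hq1⟩ : domL) := rfl
    rw [heq, map_add, map_smul, map_smul, hp2, hq2]
  -- use weak closedness of the graph
  have hgraph : (μplus, z) ∈ {p : X × Z | ∃ h : p.1 ∈ domL, L ⟨p.1, h⟩ = p.2} :=
    weak_pair_mem hLgraph hGconv hwxθ hwzθ (fun n => ⟨hdom (θ n), rfl⟩)
  obtain ⟨hplus, hLz⟩ := hgraph
  refine ⟨μplus, hFcl.1, hplus, hFcl.2, ?_⟩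
  intro μ hμD hμdom hμF
  -- first show ‖z‖ ≤ m
  have hθge : ∀ n : ℕ, (n:ℝ) ≤ (θ n : ℝ) := fun n => Nat.cast_le.mpr hθmono.le_apply
  have hsmall : Tendsto (fun n : ℕ => 1 / ((θ n : ℝ) + 1)) atTop (𝓝 0) := by
    have h1 : Tendsto (fun n : ℕ => 1 / ((n : ℝ) + 1)) atTop (𝓝 0) :=
      tendsto_one_div_add_atTop_nhds_zero_nat
    refine squeeze_zero (fun n => by positivity) (fun n => ?_) h1
    apply div_le_div_of_nonneg_left (by norm_num) (by positivity)
    linarith [hθge n]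
  have hlim1 : Tendsto (fun n => ⟪z, L ⟨μs (θ n), hdom (θ n)⟩⟫) atTop (𝓝 (‖z‖ * ‖z‖)) := by
    have := hwzθ z
    rwa [real_inner_self_eq_norm_mul_norm] at this
  have hlim2 : Tendsto (fun n => ‖z‖ * (m + 1 / ((θ n : ℝ) + 1))) atTop (𝓝 (‖z‖ * m)) := by
    have : Tendsto (fun n : ℕ => m + 1 / ((θ n : ℝ) + 1)) atTop (𝓝 (m + 0)) :=
      tendsto_const_nhds.add hsmall
    rw [add_zero] at this
    exact tendsto_const_nhds.mul this
  have hineq : ‖z‖ * ‖z‖ ≤ ‖z‖ * m := by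
    refine le_of_tendsto_of_tendsto' hlim1 hlim2 fun n => ?_
    calc ⟪z, L ⟨μs (θ n), hdom (θ n)⟩⟫ ≤ ‖z‖ * ‖L ⟨μs (θ n), hdom (θ n)⟩‖ :=
          real_inner_le_norm _ _
      _ ≤ ‖z‖ * (m + 1 / ((θ n : ℝ) + 1)) :=
          mul_le_mul_of_nonneg_left (hnorm (θ n)) (norm_nonneg _)
  have hzm : ‖z‖ ≤ m := by
    rcases eq_or_lt_of_le (norm_nonneg z) with h | h
    · rw [← h]; exact hm0
    · exact le_of_mul_le_mul_left hineq h
  calc ‖L ⟨μplus, hplus⟩‖ = ‖z‖ := by rw [hLz]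
    _ ≤ m := hzm
    _ ≤ ‖L ⟨μ, hμdom⟩‖ := hmle _ ⟨μ, hμD, hμdom, hμF, rfl⟩
end

section
/- Let X, Y, Z be real Hilbert spaces, D ⊆ X a nonempty, bounded, closed, convex subset, L : dom L ⊆ X → Z a closed linear operator with D ∩ dom L ≠ ∅, F : D → Y weakly sequentially closed, and v ∈ Y such that F(μ) = v has a solution in D ∩ dom L. Let (δₘ) be a sequence of positive numbers with δₘ → 0, let (vₘ) be a sequence in Y with ‖v − vₘ‖ ≤ δₘ for all m, and let (λₘ) be a sequence of positive numbers with λₘ → 0 and δₘ²/λₘ → 0. For each m, let μₘ be a minimizer of the Tikhonov functional T_{vₘ,λₘ}. Then: (a) the sequence (μₘ) has a weakly convergent subsequence; and (b) the limit of every weakly convergent subsequence of (μₘ) belongs to D ∩ dom L and is an ‖L(·)‖-minimizing solution of F(μ) = v. -/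
open Filter
open scoped RealInnerProductSpace ENNReal

attribute [local instance] Classical.propDecidable

open Filter TopologicalSpace
open scoped RealInnerProductSpace

section Helpers
variable {H : Type*} [NormedAddCommGroup H] [InnerProductSpace ℝ H]

/-- strong convergence implies weak convergence -/
theorem aux_weak_of_strong (x : ℕ → H) (l : H) (h : Tendsto x atTop (nhds l)) :
    ∀ w : H, Tendsto (fun n => ⟪w, x n⟫) atTop (nhds ⟪w, l⟫) :=
  fun w => (tendsto_const_nhds (x := w)).inner h

end Helpers

/-- componentwise weak limits stay in closed convex subsets of a product -/
theorem aux_mem_of_weak_prod {X Z : Type*}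
    [NormedAddCommGroup X] [InnerProductSpace ℝ X] [CompleteSpace X]
    [NormedAddCommGroup Z] [InnerProductSpace ℝ Z] [CompleteSpace Z]
    (C : Set (X × Z)) (hC : IsClosed C) (hconv : Convex ℝ C)
    (x : ℕ → X) (z : ℕ → Z) (hm : ∀ n, (x n, z n) ∈ C)
    (lx : X) (lz : Z)
    (hx : ∀ w : X, Tendsto (fun n => ⟪w, x n⟫) atTop (nhds ⟪w, lx⟫))
    (hz : ∀ w : Z, Tendsto (fun n => ⟪w, z n⟫) atTop (nhds ⟪w, lz⟫)) :
    (lx, lz) ∈ C := by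
  by_contra hnot
  obtain ⟨f, u, hfu, hfb⟩ := geometric_hahn_banach_point_closed hconv hC hnot
  set f1 : X →L[ℝ] ℝ := f.comp (ContinuousLinearMap.inl ℝ X Z) with hf1
  set f2 : Z →L[ℝ] ℝ := f.comp (ContinuousLinearMap.inr ℝ X Z) with hf2
  have hsplit : ∀ p : X × Z, f p = f1 p.1 + f2 p.2 := by
    intro p
    have h0 : (p.1, (0:Z)) + ((0:X), p.2) = p := by simp
    calc f p = f ((p.1, (0:Z)) + ((0:X), p.2)) := by rw [h0]
      _ = f (p.1, (0:Z)) + f ((0:X), p.2) := map_add f _ _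
      _ = f1 p.1 + f2 p.2 := rfl
  set w1 : X := (InnerProductSpace.toDual ℝ X).symm f1 with hw1
  set w2 : Z := (InnerProductSpace.toDual ℝ Z).symm f2 with hw2
  have h1 : ∀ y, f1 y = ⟪w1, y⟫ := fun y => (InnerProductSpace.toDual_symm_apply).symm
  have h2 : ∀ y, f2 y = ⟪w2, y⟫ := fun y => (InnerProductSpace.toDual_symm_apply).symm
  have hconv2 : Tendsto (fun n => f (x n, z n)) atTop (nhds (f (lx, lz))) := by
    have : Tendsto (fun n => ⟪w1, x n⟫ + ⟪w2, z n⟫) atTop (nhds (⟪w1, lx⟫ + ⟪w2, lz⟫)) :=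
      (hx w1).add (hz w2)
    simpa only [hsplit, h1, h2] using this
  have : u ≤ f (lx, lz) :=
    ge_of_tendsto' hconv2 (fun n => le_of_lt (hfb _ (hm n)))
  linarith

/-- Bounded sequences in a real Hilbert space have weakly convergent subsequences. -/
theorem exists_weak_subseq_s3 {H : Type*} [NormedAddCommGroup H] [InnerProductSpace ℝ H]
    [CompleteSpace H] (x : ℕ → H) (B : ℝ) (hx : ∀ n, ‖x n‖ ≤ B) :
    ∃ φ : ℕ → ℕ, StrictMono φ ∧ ∃ l : H,
      ∀ w : H, Tendsto (fun n => ⟪w, x (φ n)⟫) atTop (nhds ⟪w, l⟫) := by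
  have hB : 0 ≤ B := le_trans (norm_nonneg _) (hx 0)
  -- the closed span of the sequence
  set K : Submodule ℝ H := (Submodule.span ℝ (Set.range x)).topologicalClosure with hK
  have hKclosed : IsClosed (K : Set H) := Submodule.isClosed_topologicalClosure _
  have hxK : ∀ n, x n ∈ K :=
    fun n => Submodule.le_topologicalClosure _ (Submodule.subset_span ⟨n, rfl⟩)
  -- a countable dense family in K
  have hsep : IsSeparable (K : Set H) := by
    have : IsSeparable (Submodule.span ℝ (Set.range x) : Set H) :=
      (Set.countable_range x).isSeparable.span
    simpa [hK, Submodule.topologicalClosure_coe] using this.closure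
  obtain ⟨c, hc_count, hc_sub⟩ := hsep
  have hc_ne : (insert (0:H) c).Nonempty := ⟨0, Set.mem_insert _ _⟩
  obtain ⟨d, hd⟩ := (hc_count.insert 0).exists_eq_range hc_ne
  have hd_dense : (K : Set H) ⊆ closure (Set.range d) := by
    rw [← hd]
    exact hc_sub.trans (closure_mono (Set.subset_insert _ _))
  -- diagonal extraction via a compact metrizable product
  set C : ℕ → ℝ := fun k => ‖d k‖ * B with hC
  have hmem : ∀ n k, ⟪d k, x n⟫ ∈ Set.Icc (-(C k)) (C k) := by
    intro n k
    have h1 : |⟪d k, x n⟫| ≤ ‖d k‖ * ‖x n‖ := abs_real_inner_le_norm _ _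
    have h2 : ‖d k‖ * ‖x n‖ ≤ C k :=
      mul_le_mul_of_nonneg_left (hx n) (norm_nonneg _)
    constructor
    · linarith [neg_abs_le ⟪d k, x n⟫]
    · linarith [le_abs_self ⟪d k, x n⟫]
  set g : ℕ → ∀ k : ℕ, Set.Icc (-(C k)) (C k) := fun n k => ⟨_, hmem n k⟩ with hg
  obtain ⟨a, φ, hφ, ha⟩ := SeqCompactSpace.tendsto_subseq g
  have hconv : ∀ k, Tendsto (fun n => ⟪d k, x (φ n)⟫) atTop (nhds (a k : ℝ)) := by
    intro k
    have := (tendsto_pi_nhds.1 ha) k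
    exact ((continuous_subtype_val.tendsto _).comp this)
  -- each inner product sequence is Cauchy
  have key : ∀ w : H, CauchySeq (fun n => ⟪w, x (φ n)⟫) := by
    intro w
    set p : H := (K.orthogonalProjectionOnto w : H) with hp
    have hpK : p ∈ (K : Set H) := (K.orthogonalProjectionOnto w).2
    have hinner : ∀ n, ⟪w, x n⟫ = ⟪p, x n⟫ := by
      intro n
      have horth : ⟪w - p, x n⟫ = 0 := by
        rw [real_inner_comm]
        exact (Submodule.mem_orthogonal _ _).1 (Submodule.sub_starProjection_mem_orthogonal (K := K) w) _ (hxK n)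
      have := inner_sub_left (𝕜 := ℝ) w p (x n)
      simp only [horth] at this
      linarith [this]
    rw [Metric.cauchySeq_iff]
    intro ε hε
    have hε3 : 0 < ε / (3 * (B + 1)) := by positivity
    obtain ⟨b, hb_mem, hb_dist⟩ := Metric.mem_closure_iff.1 (hd_dense hpK) _ hε3
    obtain ⟨k, rfl⟩ := hb_mem
    have hca : CauchySeq (fun n => ⟪d k, x (φ n)⟫) := (hconv k).cauchySeq
    rw [Metric.cauchySeq_iff] at hca
    obtain ⟨N, hN⟩ := hca (ε / 3) (by positivity)
    refine ⟨N, fun m hm n hn => ?_⟩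
    have hdiff : ∀ j, |⟪p, x (φ j)⟫ - ⟪d k, x (φ j)⟫| ≤ ε / 3 := by
      intro j
      have h1 : ⟪p, x (φ j)⟫ - ⟪d k, x (φ j)⟫ = ⟪p - d k, x (φ j)⟫ := by
        rw [inner_sub_left]
      rw [h1]
      have h2 : |⟪p - d k, x (φ j)⟫| ≤ ‖p - d k‖ * ‖x (φ j)‖ := abs_real_inner_le_norm _ _
      have h3 : ‖p - d k‖ * ‖x (φ j)‖ ≤ (ε / (3 * (B + 1))) * B := by
        apply mul_le_mul (le_of_lt (by rwa [dist_eq_norm] at hb_dist)) (hx _)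
          (norm_nonneg _) (le_of_lt hε3)
      have h4 : (ε / (3 * (B + 1))) * B ≤ ε / 3 := by
        rw [div_mul_eq_mul_div, div_le_div_iff₀ (by positivity) (by positivity)]
        nlinarith
      linarith
    have hNd := hN m hm n hn
    rw [Real.dist_eq] at hNd ⊢
    simp only [hinner]
    have := hdiff m
    have := hdiff n
    have habs : |⟪p, x (φ m)⟫ - ⟪p, x (φ n)⟫| ≤
        |⟪p, x (φ m)⟫ - ⟪d k, x (φ m)⟫| + |⟪d k, x (φ m)⟫ - ⟪d k, x (φ n)⟫|
          + |⟪d k, x (φ n)⟫ - ⟪p, x (φ n)⟫| := by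
      have := abs_sub_le (⟪p, x (φ m)⟫) (⟪d k, x (φ m)⟫) (⟪p, x (φ n)⟫)
      have := abs_sub_le (⟪d k, x (φ m)⟫) (⟪d k, x (φ n)⟫) (⟪p, x (φ n)⟫)
      linarith
    have h5 : |⟪d k, x (φ n)⟫ - ⟪p, x (φ n)⟫| ≤ ε / 3 := by
      rw [abs_sub_comm]; exact hdiff n
    linarith
  -- build the limit functional
  have hlim : ∀ w : H, ∃ r : ℝ, Tendsto (fun n => ⟪w, x (φ n)⟫) atTop (nhds r) :=
    fun w => cauchySeq_tendsto_of_complete (key w)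
  choose f hf using hlim
  have hadd : ∀ w₁ w₂, f (w₁ + w₂) = f w₁ + f w₂ := by
    intro w₁ w₂
    refine tendsto_nhds_unique (hf (w₁ + w₂)) ?_
    have := (hf w₁).add (hf w₂)
    simpa [inner_add_left] using this
  have hsmul : ∀ (r : ℝ) w, f (r • w) = r * f w := by
    intro r w
    refine tendsto_nhds_unique (hf (r • w)) ?_
    have := (hf w).const_mul r
    simpa [real_inner_smul_left] using this
  have hbound : ∀ w, ‖f w‖ ≤ B * ‖w‖ := by
    intro w
    have : ∀ n, |⟪w, x (φ n)⟫| ≤ B * ‖w‖ := by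
      intro n
      calc |⟪w, x (φ n)⟫| ≤ ‖w‖ * ‖x (φ n)‖ := abs_real_inner_le_norm _ _
        _ ≤ ‖w‖ * B := mul_le_mul_of_nonneg_left (hx _) (norm_nonneg _)
        _ = B * ‖w‖ := mul_comm _ _
    have h1 : Tendsto (fun n => |⟪w, x (φ n)⟫|) atTop (nhds |f w|) := (hf w).abs
    exact le_of_tendsto h1 (Eventually.of_forall this)
  set flin : H →ₗ[ℝ] ℝ :=
    { toFun := f, map_add' := hadd, map_smul' := hsmul } with hflin
  set fcont : H →L[ℝ] ℝ := LinearMap.mkContinuous flin B hbound with hfcont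
  set l : H := (InnerProductSpace.toDual ℝ H).symm fcont with hl
  refine ⟨φ, hφ, l, fun w => ?_⟩
  have hlw : ⟪w, l⟫ = f w := by
    have : ⟪l, w⟫ = fcont w := InnerProductSpace.toDual_symm_apply
    rw [real_inner_comm]
    exact this
  rw [hlw]
  exact hf w

/-- The Tikhonov functional `T_{v,λ} : X → ℝ ∪ {∞}`,
`T_{v,λ}(μ) = (1/2)‖F(μ) − v‖² + (λ/2)‖Lμ‖²` for `μ ∈ D ∩ dom L`, and `∞` otherwise. -/
noncomputable def tikhonovFunctional {X Y Z : Type*}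
    [NormedAddCommGroup X] [InnerProductSpace ℝ X]
    [NormedAddCommGroup Y] [InnerProductSpace ℝ Y]
    [NormedAddCommGroup Z] [InnerProductSpace ℝ Z]
    (D : Set X) (domL : Submodule ℝ X) (L : domL →ₗ[ℝ] Z)
    (F : X → Y) (v : Y) (lam : ℝ) (μ : X) : ℝ≥0∞ :=
  if h : μ ∈ D ∧ μ ∈ domL then
    ENNReal.ofReal ((1 / 2) * ‖F μ - v‖ ^ 2 + (lam / 2) * ‖L ⟨μ, h.2⟩‖ ^ 2)
  else ⊤

/-- **Convergence of Tikhonov regularization (subsequential weak convergence).**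
Let `X`, `Y`, `Z` be real Hilbert spaces, `D ⊆ X` nonempty, bounded, closed, convex,
`L : dom L ⊆ X → Z` a closed linear operator with `D ∩ dom L ≠ ∅`, `F : D → Y` weakly
sequentially closed, and `v ∈ Y` attainable.  Let `δₘ ↘ 0`, `‖v − vₘ‖ ≤ δₘ`, `λₘ → 0`
with `δₘ²/λₘ → 0`, and let `μₘ` minimize `T_{vₘ,λₘ}`.  Then (a) `(μₘ)` has a weakly
convergent subsequence, and (b) the limit of every weakly convergent subsequence lies
in `D ∩ dom L` and is an `‖L(·)‖`-minimizing solution of `F(μ) = v`. -/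
theorem tikhonov_convergence_subsequences
    {X Y Z : Type*}
    [NormedAddCommGroup X] [InnerProductSpace ℝ X] [CompleteSpace X]
    [NormedAddCommGroup Y] [InnerProductSpace ℝ Y] [CompleteSpace Y]
    [NormedAddCommGroup Z] [InnerProductSpace ℝ Z] [CompleteSpace Z]
    (D : Set X) (hDne : D.Nonempty) (hDbdd : Bornology.IsBounded D)
    (hDclosed : IsClosed D) (hDconvex : Convex ℝ D)
    (domL : Submodule ℝ X) (L : domL →ₗ[ℝ] Z)
    (hLgraph : IsClosed {p : X × Z | ∃ h : p.1 ∈ domL, L ⟨p.1, h⟩ = p.2})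
    (hmeet : ∃ μ, μ ∈ D ∧ μ ∈ domL)
    (F : X → Y) (hF : WeaklySeqClosedOn F D)
    (v : Y) (hsol : ∃ μ, ∃ _ : μ ∈ D, ∃ _ : μ ∈ domL, F μ = v)
    (δ : ℕ → ℝ) (hδpos : ∀ m, 0 < δ m) (hδ0 : Tendsto δ atTop (nhds 0))
    (vm : ℕ → Y) (hvm : ∀ m, ‖v - vm m‖ ≤ δ m)
    (lam : ℕ → ℝ) (hlampos : ∀ m, 0 < lam m) (hlam0 : Tendsto lam atTop (nhds 0))
    (hrate : Tendsto (fun m => (δ m) ^ 2 / lam m) atTop (nhds 0))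
    (μm : ℕ → X)
    (hμm : ∀ m, ∀ μ : X, tikhonovFunctional D domL L F (vm m) (lam m) (μm m)
      ≤ tikhonovFunctional D domL L F (vm m) (lam m) μ) :
    (∃ φ : ℕ → ℕ, StrictMono φ ∧ ∃ μinf : X, WeakTendsto (μm ∘ φ) μinf) ∧
      ∀ φ : ℕ → ℕ, StrictMono φ → ∀ μinf : X, WeakTendsto (μm ∘ φ) μinf →
        ∃ _ : μinf ∈ D, ∃ hdom : μinf ∈ domL, F μinf = v ∧
          ∀ μ, μ ∈ D → ∀ hμ : μ ∈ domL, F μ = v →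
            ‖L ⟨μinf, hdom⟩‖ ≤ ‖L ⟨μ, hμ⟩‖ := by
  classical
  obtain ⟨μp, hμpD, hμpdom, hμpF⟩ := hsol
  -- minimizers lie in D ∩ dom L
  have hmem : ∀ m, μm m ∈ D ∧ μm m ∈ domL := by
    intro m
    by_contra hcon
    have h1 := hμm m μp
    simp only [tikhonovFunctional] at h1
    rw [dif_neg hcon, dif_pos (⟨hμpD, hμpdom⟩ : μp ∈ D ∧ μp ∈ domL)] at h1
    exact ENNReal.ofReal_ne_top (top_le_iff.mp h1)
  -- key minimality inequality against any solution
  have hkey : ∀ m, ∀ μ, ∀ _ : μ ∈ D, ∀ hdom : μ ∈ domL, F μ = v →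
      (1/2) * ‖F (μm m) - vm m‖^2 + (lam m/2) * ‖L ⟨μm m, (hmem m).2⟩‖^2
        ≤ (1/2) * (δ m)^2 + (lam m/2) * ‖L ⟨μ, hdom⟩‖^2 := by
    intro m μ hD hdom hFμ
    have h1 := hμm m μ
    simp only [tikhonovFunctional] at h1
    rw [dif_pos (hmem m), dif_pos (⟨hD, hdom⟩ : μ ∈ D ∧ μ ∈ domL)] at h1
    have hl2 : (0:ℝ) ≤ lam m / 2 := by linarith [(hlampos m).le]
    have h2 := (ENNReal.ofReal_le_ofReal_iff
      (add_nonneg (by positivity) (mul_nonneg hl2 (sq_nonneg _)))).1 h1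
    have h3 : ‖F μ - vm m‖ ≤ δ m := by rw [hFμ]; exact hvm m
    nlinarith [norm_nonneg (F μ - vm m), (hlampos m).le]
  -- consequences
  have hFbd : ∀ m, ‖F (μm m) - vm m‖^2 ≤ (δ m)^2 + lam m * ‖L ⟨μp, hμpdom⟩‖^2 := by
    intro m
    have := hkey m μp hμpD hμpdom hμpF
    nlinarith [sq_nonneg (‖L ⟨μm m, (hmem m).2⟩‖), (hlampos m).le]
  have hLbd : ∀ m, ∀ μ, ∀ _ : μ ∈ D, ∀ hdom : μ ∈ domL, F μ = v →
      ‖L ⟨μm m, (hmem m).2⟩‖^2 ≤ (δ m)^2 / lam m + ‖L ⟨μ, hdom⟩‖^2 := by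
    intro m μ hD hdom hFμ
    have h1 := hkey m μ hD hdom hFμ
    have h2 : 0 < lam m := hlampos m
    have h3 : lam m * ‖L ⟨μm m, (hmem m).2⟩‖^2 ≤ (δ m)^2 + lam m * ‖L ⟨μ, hdom⟩‖^2 := by
      nlinarith [sq_nonneg ‖F (μm m) - vm m‖]
    rw [div_add' _ _ _ (ne_of_gt h2), le_div_iff₀ h2]
    nlinarith
  -- strong convergence of F (μm m) to v
  have hFstrong : Tendsto (fun m => F (μm m)) atTop (nhds v) := by
    rw [tendsto_iff_norm_sub_tendsto_zero]
    apply squeeze_zero (fun m => norm_nonneg _)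
      (g := fun m => Real.sqrt ((δ m)^2 + lam m * ‖L ⟨μp, hμpdom⟩‖^2) + δ m)
    · intro m
      have h1 : ‖F (μm m) - v‖ ≤ ‖F (μm m) - vm m‖ + ‖vm m - v‖ := norm_sub_le_norm_sub_add_norm_sub _ _ _
      have h2 : ‖vm m - v‖ ≤ δ m := by rw [norm_sub_rev]; exact hvm m
      have h3 : ‖F (μm m) - vm m‖ ≤ Real.sqrt ((δ m)^2 + lam m * ‖L ⟨μp, hμpdom⟩‖^2) := by
        rw [Real.le_sqrt (norm_nonneg _) (by nlinarith [hFbd m, sq_nonneg ‖F (μm m) - vm m‖])]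
        exact hFbd m
      linarith
    · have h1 : Tendsto (fun m => (δ m)^2 + lam m * ‖L ⟨μp, hμpdom⟩‖^2) atTop (nhds 0) := by
        have h2 : Tendsto (fun m => (δ m)^2) atTop (nhds 0) := by
          have := hδ0.mul hδ0
          simpa [pow_two] using this
        have h3 : Tendsto (fun m => lam m * ‖L ⟨μp, hμpdom⟩‖^2) atTop (nhds 0) := by
          simpa using hlam0.mul_const (‖L ⟨μp, hμpdom⟩‖^2)
        simpa using h2.add h3
      have h4 : Tendsto (fun m => Real.sqrt ((δ m)^2 + lam m * ‖L ⟨μp, hμpdom⟩‖^2))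
          atTop (nhds 0) := by
        have := (Real.continuous_sqrt.tendsto 0).comp h1
        simpa [Function.comp_def] using this
      simpa using h4.add hδ0
  constructor
  · -- part (a)
    obtain ⟨R, hR⟩ := hDbdd.exists_norm_le
    obtain ⟨φ, hφ, l, hl⟩ := exists_weak_subseq_s3 μm R (fun m => hR _ (hmem m).1)
    exact ⟨φ, hφ, l, hl⟩
  · -- part (b)
    intro φ hφ μinf hw
    have hFsub : WeakTendsto (fun n => F ((μm ∘ φ) n)) v := by
      intro w
      exact aux_weak_of_strong (fun m => F (μm m)) v hFstrong w |>.comp hφ.tendsto_atTop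
    obtain ⟨hDmem, hFeq⟩ := hF (μm ∘ φ) μinf v (fun n => (hmem _).1) hw hFsub
    -- the L-images along the subsequence are bounded
    set zs : ℕ → Z := fun n => L ⟨μm (φ n), (hmem (φ n)).2⟩ with hzs
    obtain ⟨Cb, hCb'⟩ := hrate.bddAbove_range
    have hCb : ∀ m, (δ m)^2 / lam m ≤ Cb := fun m => hCb' ⟨m, rfl⟩
    have hCb0 : 0 ≤ Cb := le_trans (div_nonneg (sq_nonneg _) (hlampos 0).le) (hCb 0)
    have hzbd : ∀ n, ‖zs n‖ ≤ Real.sqrt (Cb + ‖L ⟨μp, hμpdom⟩‖^2) := by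
      intro n
      rw [Real.le_sqrt (norm_nonneg _) (add_nonneg hCb0 (sq_nonneg _))]
      calc ‖zs n‖^2 ≤ (δ (φ n))^2 / lam (φ n) + ‖L ⟨μp, hμpdom⟩‖^2 :=
            hLbd (φ n) μp hμpD hμpdom hμpF
        _ ≤ Cb + ‖L ⟨μp, hμpdom⟩‖^2 := by linarith [hCb (φ n)]
    obtain ⟨ψ, hψ, z, hz⟩ := exists_weak_subseq_s3 zs _ hzbd
    -- the graph is convex
    have hGconv : Convex ℝ {p : X × Z | ∃ h : p.1 ∈ domL, L ⟨p.1, h⟩ = p.2} := by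
      rintro p ⟨hp, hpe⟩ q ⟨hq, hqe⟩ a b ha hb hab
      have hd : (a • p + b • q).1 ∈ domL := by
        simp only [Prod.fst_add, Prod.smul_fst]
        exact Submodule.add_mem _ (Submodule.smul_mem _ _ hp) (Submodule.smul_mem _ _ hq)
      refine ⟨hd, ?_⟩
      have hsub : (⟨(a • p + b • q).1, hd⟩ : domL) = a • ⟨p.1, hp⟩ + b • ⟨q.1, hq⟩ := by
        apply Subtype.ext
        simp
      rw [hsub, map_add, map_smul, map_smul, hpe, hqe]
      simp
    -- weak limit of the pairs lies in the graph
    have hpair : (μinf, z) ∈ {p : X × Z | ∃ h : p.1 ∈ domL, L ⟨p.1, h⟩ = p.2} := by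
      apply aux_mem_of_weak_prod _ hLgraph hGconv
        (fun n => μm (φ (ψ n))) (fun n => zs (ψ n))
        (fun n => ⟨(hmem _).2, rfl⟩) μinf z
      · intro w
        exact (hw w).comp hψ.tendsto_atTop
      · exact hz
    obtain ⟨hdom, hLz⟩ := hpair
    refine ⟨hDmem, hdom, hFeq, ?_⟩
    intro μ hD hdomμ hFμ
    rw [hLz]
    -- ‖z‖ ≤ ‖L μ‖ via weak lower semicontinuity
    set t : ℝ := ‖L ⟨μ, hdomμ⟩‖ with ht
    have ht0 : 0 ≤ t := norm_nonneg _
    have ha : Tendsto (fun n => ⟪z, zs (ψ n)⟫) atTop (nhds (‖z‖^2)) := by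
      have := hz z
      rwa [real_inner_self_eq_norm_sq] at this
    have hb : Tendsto (fun n => ‖z‖ * Real.sqrt ((δ (φ (ψ n)))^2 / lam (φ (ψ n)) + t^2))
        atTop (nhds (‖z‖ * t)) := by
      have h1 : Tendsto (fun n => (δ (φ (ψ n)))^2 / lam (φ (ψ n))) atTop (nhds 0) :=
        hrate.comp ((hφ.comp hψ).tendsto_atTop)
      have h2 : Tendsto (fun n => (δ (φ (ψ n)))^2 / lam (φ (ψ n)) + t^2) atTop (nhds (t^2)) := by
        simpa using h1.add_const (t^2)
      have h3 := (Real.continuous_sqrt.tendsto (t^2)).comp h2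
      rw [Real.sqrt_sq ht0] at h3
      exact h3.const_mul ‖z‖
    have hab : ∀ n, ⟪z, zs (ψ n)⟫ ≤ ‖z‖ * Real.sqrt ((δ (φ (ψ n)))^2 / lam (φ (ψ n)) + t^2) := by
      intro n
      have h1 : ⟪z, zs (ψ n)⟫ ≤ ‖z‖ * ‖zs (ψ n)‖ := real_inner_le_norm _ _
      have h2 : ‖zs (ψ n)‖ ≤ Real.sqrt ((δ (φ (ψ n)))^2 / lam (φ (ψ n)) + t^2) := by
        rw [Real.le_sqrt (norm_nonneg _)
          (add_nonneg (div_nonneg (sq_nonneg _) (hlampos _).le) (sq_nonneg _))]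
        exact hLbd (φ (ψ n)) μ hD hdomμ hFμ
      calc ⟪z, zs (ψ n)⟫ ≤ ‖z‖ * ‖zs (ψ n)‖ := h1
        _ ≤ _ := mul_le_mul_of_nonneg_left h2 (norm_nonneg _)
    have hfinal : ‖z‖^2 ≤ ‖z‖ * t :=
      le_of_tendsto_of_tendsto' ha hb hab
    rcases eq_or_lt_of_le (norm_nonneg z) with h0 | h0
    · rw [← h0]; exact ht0
    · have : ‖z‖ * ‖z‖ ≤ ‖z‖ * t := by nlinarith
      exact le_of_mul_le_mul_left this h0
end
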